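/- arXiv:2512.06715 — 4 statements merged into one kernel-verified Lean document; each statement's English description precedes it below -/
import Mathlib

section
/- Fixed points of the PDHG iteration satisfy the KKT conditions of the equality-form linear program: if τ > 0, σ > 0, and (x*, y*) ∈ ℝ^n × ℝ^m satisfies x* = proj_{ℝ^n_+}(x* + τ Aᵀ y* − τ c) and y* = y* − σ A (2 x* − x*) + σ b, then A x* = b, x* ≥ 0 componentwise, Aᵀ y* ≤ c componentwise, and complementary slackness holds: x*ᵀ (c − Aᵀ y*) = 0. -/
open Matrix

/-- Componentwise projection onto the nonnegative orthant. -/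
def projPos {n : ℕ} (z : Fin n → ℝ) : Fin n → ℝ := fun i => max (z i) 0

/-- Fixed points of the PDHG iteration satisfy the KKT conditions of the
equality-form linear program: `A x* = b`, `x* ≥ 0`, `Aᵀ y* ≤ c`, and
complementary slackness `x*ᵀ (c − Aᵀ y*) = 0`. -/
theorem pdhg_fixed_point_kkt {m n : ℕ}
    (A : Matrix (Fin m) (Fin n) ℝ) (b : Fin m → ℝ) (c : Fin n → ℝ)
    (τ σ : ℝ) (hτ : 0 < τ) (hσ : 0 < σ)
    (xs : Fin n → ℝ) (ys : Fin m → ℝ)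
    (hx : xs = projPos (xs + τ • Aᵀ.mulVec ys - τ • c))
    (hy : ys = ys - σ • A.mulVec ((2 : ℝ) • xs - xs) + σ • b) :
    A.mulVec xs = b ∧ (∀ i, 0 ≤ xs i) ∧ (∀ i, (Aᵀ.mulVec ys) i ≤ c i) ∧
      xs ⬝ᵥ (c - Aᵀ.mulVec ys) = 0 := by
  have h2 : (2:ℝ) • xs - xs = xs := by
    funext i; simp [two_smul]
  rw [h2] at hy
  have hAxb : A.mulVec xs = b := by
    funext i
    have := congrFun hy i
    simp only [Pi.add_apply, Pi.sub_apply, Pi.smul_apply, smul_eq_mul] at this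
    nlinarith [this]
  have key : ∀ i, 0 ≤ xs i ∧ (Aᵀ.mulVec ys) i ≤ c i ∧ xs i * (c i - (Aᵀ.mulVec ys) i) = 0 := by
    intro i
    have hxi := congrFun hx i
    simp only [projPos, Pi.add_apply, Pi.sub_apply, Pi.smul_apply, smul_eq_mul] at hxi
    rcases le_or_gt 0 (xs i + τ * Aᵀ.mulVec ys i - τ * c i) with h | h
    · have heq : Aᵀ.mulVec ys i = c i := by
        rw [max_eq_left h] at hxi; nlinarith
      refine ⟨?_, le_of_eq heq, by rw [heq]; ring⟩
      rw [hxi]; exact le_max_right _ _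
    · rw [max_eq_right h.le] at hxi
      have : Aᵀ.mulVec ys i < c i := by nlinarith
      exact ⟨hxi.ge, this.le, by rw [hxi]; ring⟩
  refine ⟨hAxb, fun i => (key i).1, fun i => (key i).2.1, ?_⟩
  unfold dotProduct
  apply Finset.sum_eq_zero
  intro i _
  simpa using (key i).2.2
end

section
/- Fixed points of the PDHG iteration have zero duality gap: if τ > 0, σ > 0, and (x*, y*) ∈ ℝ^n × ℝ^m satisfies x* = proj_{ℝ^n_+}(x* + τ Aᵀ y* − τ c) and y* = y* − σ A (2 x* − x*) + σ b, then cᵀ x* = bᵀ y*. -/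
open Matrix

/-- Fixed points of the PDHG iteration have zero duality gap: `cᵀ x* = bᵀ y*`. -/
theorem pdhg_fixed_point_zero_gap {m n : ℕ}
    (A : Matrix (Fin m) (Fin n) ℝ) (b : Fin m → ℝ) (c : Fin n → ℝ)
    (τ σ : ℝ) (hτ : 0 < τ) (hσ : 0 < σ)
    (xs : Fin n → ℝ) (ys : Fin m → ℝ)
    (hx : xs = projPos (xs + τ • Aᵀ.mulVec ys - τ • c))
    (hy : ys = ys - σ • A.mulVec ((2 : ℝ) • xs - xs) + σ • b) :
    c ⬝ᵥ xs = b ⬝ᵥ ys := by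
  have hAx : A.mulVec xs = b := by
    have h2 : (2 : ℝ) • xs - xs = xs := by
      funext i; simp [Pi.smul_apply]; ring
    rw [h2] at hy
    funext j
    have := congrFun hy j
    simp only [Pi.add_apply, Pi.sub_apply, Pi.smul_apply, smul_eq_mul] at this
    have h : σ * A.mulVec xs j = σ * b j := by linarith
    exact mul_left_cancel₀ (ne_of_gt hσ) h
  have key : ∀ i, c i * xs i = (Aᵀ.mulVec ys) i * xs i := by
    intro i
    set v := Aᵀ.mulVec ys with hv
    have hxi := congrFun hx i
    simp only [projPos, Pi.add_apply, Pi.sub_apply, Pi.smul_apply, smul_eq_mul] at hxi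
    rcases le_or_gt (xs i + τ * v i - τ * c i) 0 with h | h
    · have : xs i = 0 := by
        rw [hxi]; exact max_eq_right h
      rw [this]; ring
    · have hmax : max (xs i + τ * v i - τ * c i) 0 = xs i + τ * v i - τ * c i :=
        max_eq_left (le_of_lt h)
      rw [hmax] at hxi
      have hd : τ * v i - τ * c i = 0 := by linarith
      have : v i = c i := by
        have : τ * (v i - c i) = 0 := by ring_nf; linarith
        rcases mul_eq_zero.mp this with h' | h'
        · exact absurd h' (ne_of_gt hτ)
        · linarith
      rw [this]
  have h1 : c ⬝ᵥ xs = (Aᵀ.mulVec ys) ⬝ᵥ xs := by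
    unfold dotProduct
    exact Finset.sum_congr rfl fun i _ => key i
  rw [h1]
  rw [Matrix.mulVec_transpose, ← Matrix.dotProduct_mulVec, hAx, dotProduct_comm]
end

section
/- Fixed points of the PDHG iteration are primal and dual optimal: if τ > 0, σ > 0, and (x*, y*) ∈ ℝ^n × ℝ^m satisfies x* = proj_{ℝ^n_+}(x* + τ Aᵀ y* − τ c) and y* = y* − σ A (2 x* − x*) + σ b, then (i) x* is optimal for the primal: for every x ∈ ℝ^n with A x = b and x ≥ 0, cᵀ x* ≤ cᵀ x, and (ii) y* is optimal for the dual: for every y ∈ ℝ^m with Aᵀ y ≤ c, bᵀ y ≤ bᵀ y*. -/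
open Matrix

/-- Fixed points of the PDHG iteration are primal and dual optimal:
(i) `cᵀ x* ≤ cᵀ x` for every primal-feasible `x`; (ii) `bᵀ y ≤ bᵀ y*` for every
dual-feasible `y`. -/
theorem pdhg_fixed_point_optimal {m n : ℕ}
    (A : Matrix (Fin m) (Fin n) ℝ) (b : Fin m → ℝ) (c : Fin n → ℝ)
    (τ σ : ℝ) (hτ : 0 < τ) (hσ : 0 < σ)
    (xs : Fin n → ℝ) (ys : Fin m → ℝ)
    (hx : xs = projPos (xs + τ • Aᵀ.mulVec ys - τ • c))
    (hy : ys = ys - σ • A.mulVec ((2 : ℝ) • xs - xs) + σ • b) :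
    (∀ x : Fin n → ℝ, A.mulVec x = b → (∀ i, 0 ≤ x i) → c ⬝ᵥ xs ≤ c ⬝ᵥ x) ∧
    (∀ y : Fin m → ℝ, (∀ i, (Aᵀ.mulVec y) i ≤ c i) → b ⬝ᵥ y ≤ b ⬝ᵥ ys) := by
  have h2 : (2 : ℝ) • xs - xs = xs := by
    funext i; simp [two_smul]
  rw [h2] at hy
  -- A xs = b
  have hAxs : A.mulVec xs = b := by
    funext i
    have := congrFun hy i
    simp only [Pi.add_apply, Pi.sub_apply, Pi.smul_apply, smul_eq_mul] at this
    have h := this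
    nlinarith [h]
  -- componentwise fixed point equation
  have hxi : ∀ i, xs i = max (xs i + τ * (Aᵀ.mulVec ys) i - τ * c i) 0 := by
    intro i
    have := congrFun hx i
    simpa [projPos, Pi.add_apply, Pi.sub_apply, Pi.smul_apply, smul_eq_mul] using this
  have hx0 : ∀ i, 0 ≤ xs i := fun i => (hxi i).symm ▸ le_max_right _ _
  have hs : ∀ i, (Aᵀ.mulVec ys) i ≤ c i := by
    intro i
    have h := hxi i
    have hle : xs i + τ * (Aᵀ.mulVec ys) i - τ * c i ≤ xs i := by
      nth_rewrite 2 [h]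
      exact le_max_left _ _
    nlinarith
  have hcs : ∀ i, xs i * ((Aᵀ.mulVec ys) i - c i) = 0 := by
    intro i
    rcases eq_or_lt_of_le (hx0 i) with h | h
    · rw [← h]; ring
    · have heq := hxi i
      rcases max_cases (xs i + τ * (Aᵀ.mulVec ys) i - τ * c i) 0 with ⟨h1, _⟩ | ⟨h1, _⟩
      · rw [h1] at heq
        have : (Aᵀ.mulVec ys) i - c i = 0 := by nlinarith
        rw [this]; ring
      · rw [h1] at heq; linarith
  -- complementary slackness: xs ⬝ᵥ Aᵀ ys = xs ⬝ᵥ c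
  have hdot : xs ⬝ᵥ (Aᵀ.mulVec ys) = xs ⬝ᵥ c := by
    unfold dotProduct
    rw [← sub_eq_zero, ← Finset.sum_sub_distrib]
    apply Finset.sum_eq_zero
    intro i _
    have := hcs i
    nlinarith [hcs i]
  -- strong duality value: c ⬝ᵥ xs = b ⬝ᵥ ys
  have hval : c ⬝ᵥ xs = b ⬝ᵥ ys := by
    have h1 : xs ⬝ᵥ (Aᵀ.mulVec ys) = (A.mulVec xs) ⬝ᵥ ys := by
      rw [Matrix.dotProduct_mulVec, Matrix.vecMul_transpose]
    rw [dotProduct_comm c xs, ← hdot, h1, hAxs, dotProduct_comm]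
  constructor
  · intro x hAx hx0'
    have h1 : (Aᵀ.mulVec ys) ⬝ᵥ x ≤ c ⬝ᵥ x := by
      apply Finset.sum_le_sum
      intro i _
      exact mul_le_mul_of_nonneg_right (hs i) (hx0' i)
    have h2 : (Aᵀ.mulVec ys) ⬝ᵥ x = b ⬝ᵥ ys := by
      rw [dotProduct_comm, Matrix.dotProduct_mulVec, Matrix.vecMul_transpose, hAx,
        dotProduct_comm]
    linarith [hval ▸ (h2 ▸ h1)]
  · intro y hyf
    have h1 : xs ⬝ᵥ (Aᵀ.mulVec y) ≤ xs ⬝ᵥ c := by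
      apply Finset.sum_le_sum
      intro i _
      exact mul_le_mul_of_nonneg_left (hyf i) (hx0 i)
    have h2 : xs ⬝ᵥ (Aᵀ.mulVec y) = b ⬝ᵥ y := by
      rw [Matrix.dotProduct_mulVec, Matrix.vecMul_transpose, hAxs]
    have h3 : xs ⬝ᵥ c = b ⬝ᵥ ys := by rw [dotProduct_comm, hval]
    linarith [h2 ▸ (h3 ▸ h1)]
end

section
/- Fixed points of the PDHG iteration are saddle points of the Lagrangian: if τ > 0, σ > 0, and (x*, y*) ∈ ℝ^n × ℝ^m satisfies x* = proj_{ℝ^n_+}(x* + τ Aᵀ y* − τ c) and y* = y* − σ A (2 x* − x*) + σ b, then x* ≥ 0 and L(x*, y) ≤ L(x*, y*) ≤ L(x, y*) for every y ∈ ℝ^m and every x ∈ ℝ^n with x ≥ 0. -/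
open Matrix

/-- The Lagrangian `L(x, y) = cᵀ x − yᵀ (A x) + bᵀ y`. -/
def lagrangian {m n : ℕ} (A : Matrix (Fin m) (Fin n) ℝ) (b : Fin m → ℝ)
    (c : Fin n → ℝ) (x : Fin n → ℝ) (y : Fin m → ℝ) : ℝ :=
  c ⬝ᵥ x - y ⬝ᵥ A.mulVec x + b ⬝ᵥ y

/-- Fixed points of the PDHG iteration are saddle points of the Lagrangian:
`x* ≥ 0` and `L(x*, y) ≤ L(x*, y*) ≤ L(x, y*)` for every `y` and every `x ≥ 0`. -/
theorem pdhg_fixed_point_saddle {m n : ℕ}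
    (A : Matrix (Fin m) (Fin n) ℝ) (b : Fin m → ℝ) (c : Fin n → ℝ)
    (τ σ : ℝ) (hτ : 0 < τ) (hσ : 0 < σ)
    (xs : Fin n → ℝ) (ys : Fin m → ℝ)
    (hx : xs = projPos (xs + τ • Aᵀ.mulVec ys - τ • c))
    (hy : ys = ys - σ • A.mulVec ((2 : ℝ) • xs - xs) + σ • b) :
    (∀ i, 0 ≤ xs i) ∧
    (∀ y : Fin m → ℝ, lagrangian A b c xs y ≤ lagrangian A b c xs ys) ∧
    (∀ x : Fin n → ℝ, (∀ i, 0 ≤ x i) →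
      lagrangian A b c xs ys ≤ lagrangian A b c x ys) := by
  -- A xs = b
  have h2 : (2 : ℝ) • xs - xs = xs := by funext i; simp [Pi.smul_apply]; ring
  rw [h2] at hy
  have hAxs : A.mulVec xs = b := by
    funext j
    have := congrFun hy j
    simp [Pi.add_apply, Pi.sub_apply, Pi.smul_apply, smul_eq_mul] at this
    have h' : σ * (b j - A.mulVec xs j) = 0 := by linarith
    have := mul_eq_zero.1 h'
    rcases this with h | h
    · exact absurd h (ne_of_gt hσ)
    · linarith
  -- componentwise fixed point equation
  set g : Fin n → ℝ := fun i => c i - Aᵀ.mulVec ys i with hg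
  have hxi : ∀ i, xs i = max (xs i - τ * g i) 0 := by
    intro i
    have := congrFun hx i
    simp [projPos, Pi.add_apply, Pi.sub_apply, Pi.smul_apply, smul_eq_mul, hg] at this
    convert this using 2
    ring
  have hpos : ∀ i, 0 ≤ xs i := fun i => (hxi i) ▸ le_max_right _ _
  have hcomp : ∀ i, 0 ≤ g i ∧ xs i * g i = 0 := by
    intro i
    rcases le_or_gt (xs i - τ * g i) 0 with h | h
    · have hx0 : xs i = 0 := by rw [hxi i, max_eq_right h]
      have hgi : 0 ≤ g i := by
        rw [hx0] at h
        simpa using nonneg_of_mul_nonneg_right (by linarith : 0 ≤ τ * g i) hτ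
      exact ⟨hgi, by rw [hx0]; ring⟩
    · have heq := hxi i
      rw [max_eq_left h.le] at heq
      have hgi : g i = 0 := by
        have : τ * g i = 0 := by linarith
        rcases mul_eq_zero.1 this with h' | h'
        · exact absurd h' (ne_of_gt hτ)
        · exact h'
      exact ⟨hgi.ge, by rw [hgi]; ring⟩
  refine ⟨hpos, ?_, ?_⟩
  · intro y
    simp [lagrangian, hAxs, dotProduct_comm b]
  · intro x hxnn
    have key : ∀ z : Fin n → ℝ, lagrangian A b c z ys =
        (∑ i, g i * z i) + b ⬝ᵥ ys := by
      intro z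
      simp only [lagrangian, Matrix.dotProduct_mulVec, ← Matrix.mulVec_transpose, hg]
      simp [dotProduct, Finset.sum_sub_distrib]
      rw [← Finset.sum_sub_distrib]
      exact Finset.sum_congr rfl fun i _ => by ring
    rw [key x, key xs]
    have h1 : (∑ i, g i * xs i) = 0 :=
      Finset.sum_eq_zero fun i _ => by rw [mul_comm]; exact (hcomp i).2
    have h2 : 0 ≤ ∑ i, g i * x i :=
      Finset.sum_nonneg fun i _ => mul_nonneg (hcomp i).1 (hxnn i)
    linarith
end
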